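/- (Isomorphisms permute layers.) Let φ be an isomorphism between nontrivial, connected finite graphs with loops G and H, each with at least one unlooped vertex, where G = □_{i : Fin k} G i and H = □_{j : Fin ℓ} H j are Cartesian products of irreducible graphs. Then k = ℓ, and for every unlooped vertex a of G there is a permutation π of Fin k such that for every i, φ maps the i-th layer of G through a onto the π(i)-th layer of H through φ(a): φ({ x | x j = a j for all j ≠ i }) = { y | y j = (φ a) j for all j ≠ π(i) }. -/

import Mathlib

universe u

/-- A graph with loops on a vertex type `V`: a symmetric binary relation. -/
structure LoopGraph (V : Type*) where
  adj : V → V → Prop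
  symm : ∀ u v, adj u v → adj v u

namespace LoopGraph

/-- The Cartesian product `G □ H` of two graphs with loops. -/
def box {V W : Type*} (G : LoopGraph V) (H : LoopGraph W) : LoopGraph (V × W) where
  adj p q := (G.adj p.1 q.1 ∧ p.2 = q.2) ∨ (p.1 = q.1 ∧ H.adj p.2 q.2)
  symm p q h := by
    rcases h with ⟨h, e⟩ | ⟨e, h⟩
    · exact Or.inl ⟨G.symm _ _ h, e.symm⟩
    · exact Or.inr ⟨e.symm, H.symm _ _ h⟩

/-- The Cartesian product `□_i G i` of a finite family of graphs with loops. -/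
def boxPi {k : ℕ} {V : Fin k → Type*} (G : ∀ i, LoopGraph (V i)) :
    LoopGraph (∀ i, V i) where
  adj x y := ∃ i, (G i).adj (x i) (y i) ∧ ∀ j, j ≠ i → x j = y j
  symm x y h := by
    obtain ⟨i, h1, h2⟩ := h
    exact ⟨i, (G i).symm _ _ h1, fun j hj => (h2 j hj).symm⟩

/-- Two graphs with loops are isomorphic if there is a bijection of the vertex
types preserving and reflecting adjacency. -/
def IsIsomorphic {V W : Type*} (G : LoopGraph V) (H : LoopGraph W) : Prop :=
  ∃ φ : V ≃ W, ∀ u v, G.adj u v ↔ H.adj (φ u) (φ v)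

/-- `N G` is `G` with its loops removed, as a simple graph. -/
def N {V : Type*} (G : LoopGraph V) : SimpleGraph V where
  Adj u v := u ≠ v ∧ G.adj u v
  symm := ⟨fun _ _ h => ⟨h.1.symm, G.symm _ _ h.2⟩⟩
  loopless := ⟨fun _ h => h.1 rfl⟩

/-- `G` with its loops removed, as a graph with loops. -/
def removeLoops {V : Type*} (G : LoopGraph V) : LoopGraph V where
  adj u v := u ≠ v ∧ G.adj u v
  symm u v h := ⟨h.1.symm, G.symm _ _ h.2⟩

/-- `G` with a loop attached to every vertex. -/
def fullLoops {V : Type*} (G : LoopGraph V) : LoopGraph V where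
  adj u v := G.adj u v ∨ u = v
  symm u v h := by
    rcases h with h | h
    · exact Or.inl (G.symm _ _ h)
    · exact Or.inr h.symm

/-- A graph with loops is trivial if it has exactly one vertex and no loop. -/
def IsTrivial {V : Type*} (G : LoopGraph V) : Prop :=
  (∃ v : V, ∀ w : V, w = v) ∧ ∀ v, ¬ G.adj v v

/-- A nontrivial connected graph with loops with at least one unlooped vertex is
irreducible if in every factorization into two factors, one factor is trivial. -/
def Irreducible {V : Type u} (G : LoopGraph V) : Prop :=
  ¬ G.IsTrivial ∧ G.N.Connected ∧ (∃ v, ¬ G.adj v v) ∧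
    ∀ (W L : Type u) (H : LoopGraph W) (K : LoopGraph L),
      G.IsIsomorphic (H.box K) → H.IsTrivial ∨ K.IsTrivial

/-- A set of vertices is convex if every shortest walk (in `N G`) between two of
its vertices stays inside the set. -/
def ConvexSet {V : Type*} (G : LoopGraph V) (S : Set V) : Prop :=
  ∀ u ∈ S, ∀ v ∈ S, ∀ p : G.N.Walk u v,
    p.length = G.N.dist u v → ∀ x ∈ p.support, x ∈ S

/-- The disjoint union of two graphs with loops. -/
def disjUnion {W U : Type*} (H : LoopGraph W) (K : LoopGraph U) :
    LoopGraph (W ⊕ U) where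
  adj x y := Sum.LiftRel H.adj K.adj x y
  symm x y h := by
    cases h with
    | inl h => exact Sum.LiftRel.inl (H.symm _ _ h)
    | inr h => exact Sum.LiftRel.inr (K.symm _ _ h)

/-- The trivial graph `K₁`: one vertex, no loop. -/
def K1 : LoopGraph PUnit := ⟨fun _ _ => False, fun _ _ h => h.elim⟩

/-- The single looped vertex `K₁*`. -/
def K1star : LoopGraph PUnit := ⟨fun _ _ => True, fun _ _ _ => trivial⟩

/-- The 0/1 adjacency matrix of a graph with loops. -/
def adjMatrix {V : Type*} (G : LoopGraph V) [DecidableRel G.adj] : Matrix V V ℕ :=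
  Matrix.of fun u v => if G.adj u v then 1 else 0

end LoopGraph

/-!
Distances in a Cartesian product of connected graphs add up over the coordinates. Hence a layer
`L` through `a`, and with it `φ '' L`, contains every vertex lying between two of its vertices,
and such a set in a product is a box `∏ j, C j`. Through an unlooped `a`, the irreducible factor
`G i` is isomorphic to `L`, hence to `□ j, C j`, so all but one `C m` are single vertices: `φ`
maps the layer into the layer of `H` through `φ a` in direction `m`. Doing the same for `φ⁻¹`
gives an inverse index map, which turns the inclusions into equalities.
-/

namespace SimpleGraph

variable {A B : Type*} {G : SimpleGraph A} {G' : SimpleGraph B}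

lemma Iso.dist_le (ψ : G ≃g G') {u v : A} (h : G.Reachable u v) :
    G'.dist (ψ u) (ψ v) ≤ G.dist u v := by
  obtain ⟨p, hp⟩ := h.exists_walk_length_eq_dist
  simpa [hp] using SimpleGraph.dist_le (p.map ψ.toHom)

lemma Iso.dist_eq (ψ : G ≃g G') (u v : A) : G'.dist (ψ u) (ψ v) = G.dist u v := by
  by_cases h : G.Reachable u v
  · refine le_antisymm (ψ.dist_le h) ?_
    simpa using ψ.symm.dist_le ((Iso.reachable_iff (φ := ψ)).2 h)
  · rw [dist_eq_zero_of_not_reachable h, dist_eq_zero_of_not_reachable (mt Iso.reachable_iff.1 h)]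

/-- For a connected graph this is convexity in the sense of `LoopGraph.ConvexSet`, phrased
through distances rather than shortest walks. -/
def IsIntervalClosed (G : SimpleGraph A) (S : Set A) : Prop :=
  ∀ x ∈ S, ∀ y ∈ S, ∀ z, G.dist x z + G.dist z y = G.dist x y → z ∈ S

lemma IsIntervalClosed.image_iso {S : Set A} (hS : G.IsIntervalClosed S) (ψ : G ≃g G') :
    G'.IsIntervalClosed (ψ '' S) := by
  rintro _ ⟨x, hx, rfl⟩ _ ⟨y, hy, rfl⟩ z hz
  refine ⟨ψ.symm z, hS x hx y hy _ ?_, ψ.apply_symm_apply z⟩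
  rwa [← ψ.dist_eq, ← ψ.dist_eq, ← ψ.dist_eq, ψ.apply_symm_apply]

end SimpleGraph

lemma Set.pi_image_eval_subset_of_update_mem {ι : Type*} [Finite ι] [DecidableEq ι]
    {V : ι → Type*} {S : Set (∀ i, V i)} (hne : S.Nonempty)
    (hS : ∀ x ∈ S, ∀ y ∈ S, ∀ i, Function.update x i (y i) ∈ S) :
    Set.univ.pi (fun i => Function.eval i '' S) ⊆ S := by
  obtain ⟨y, hy⟩ := hne
  have : Fintype ι := Fintype.ofFinite ι
  suffices key : ∀ s : Finset ι, ∀ z, (∀ i ∈ s, z i ∈ Function.eval i '' S) →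
      (∀ i ∉ s, z i = y i) → z ∈ S from
    fun z hz => key Finset.univ z (fun i _ => hz i (Set.mem_univ i)) (by simp)
  intro s
  induction s using Finset.induction with
  | empty =>
    intro z _ hzy
    rwa [funext fun i => hzy i (Finset.notMem_empty i)]
  | insert i s his ih =>
    intro z hz hzy
    obtain ⟨x, hx, hxi⟩ := hz i (Finset.mem_insert_self i s)
    have hz' : Function.update z i (y i) ∈ S := by
      refine ih _ (fun j hj => ?_) (fun j hj => ?_)
      · rw [Function.update_of_ne (ne_of_mem_of_not_mem hj his)]
        exact hz j (Finset.mem_insert_of_mem hj)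
      · rcases eq_or_ne j i with rfl | hji
        · exact Function.update_self ..
        · rw [Function.update_of_ne hji]
          exact hzy j (by simp [hji, hj])
    simpa [hxi] using hS _ hz' x hx i

namespace LoopGraph

open SimpleGraph Function

variable {A B C : Type*} {X : LoopGraph A} {Y : LoopGraph B} {Z : LoopGraph C}

def induce (X : LoopGraph A) (S : Set A) : LoopGraph S where
  adj u v := X.adj u v
  symm u v := X.symm u v

def layer {ι : Type*} {V : ι → Type*} (a : ∀ i, V i) (i : ι) : Set (∀ i, V i) :=
  {x | ∀ j, j ≠ i → x j = a j}

lemma IsIsomorphic.trans (hXY : X.IsIsomorphic Y) (hYZ : Y.IsIsomorphic Z) :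
    X.IsIsomorphic Z := by
  obtain ⟨e, he⟩ := hXY
  obtain ⟨f, hf⟩ := hYZ
  exact ⟨e.trans f, fun u v => (he u v).trans (hf _ _)⟩

lemma IsTrivial.subsingleton (h : X.IsTrivial) : Subsingleton A := by
  obtain ⟨⟨v, hv⟩, -⟩ := h
  exact ⟨fun x y => (hv x).trans (hv y).symm⟩

lemma Irreducible.nontrivial {A : Type u} {X : LoopGraph A} (h : X.Irreducible) :
    Nontrivial A := by
  obtain ⟨hnt, -, ⟨v, hv⟩, -⟩ := h
  by_contra hA
  rw [not_nontrivial_iff_subsingleton] at hA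
  exact hnt ⟨⟨v, fun w => Subsingleton.elim w v⟩, fun w => Subsingleton.elim w v ▸ hv⟩

def isoN (e : A ≃ B) (he : ∀ u v, X.adj u v ↔ Y.adj (e u) (e v)) : X.N ≃g Y.N where
  toEquiv := e
  map_rel_iff' {u v} := and_congr e.injective.ne_iff (he u v).symm

lemma isIsomorphic_induce_image (e : A ≃ B) (he : ∀ u v, X.adj u v ↔ Y.adj (e u) (e v))
    (S : Set A) : (X.induce S).IsIsomorphic (Y.induce (e '' S)) :=
  ⟨e.image S, fun u v => he u v⟩

section Product

variable {k : ℕ} {V : Fin k → Type*} {F : ∀ i, LoopGraph (V i)}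

lemma boxPi_adj_update_update_iff {a : ∀ i, V i} (ha : ¬ (boxPi F).adj a a) (i : Fin k)
    (v v' : V i) : (boxPi F).adj (update a i v) (update a i v') ↔ (F i).adj v v' := by
  refine ⟨fun ⟨m, hm, _⟩ => ?_, fun h => ⟨i, by simpa using h, fun j hj => by simp [hj]⟩⟩
  rcases eq_or_ne m i with rfl | hmi
  · simpa using hm
  · exact (ha ⟨m, by simpa [hmi] using hm, fun _ _ => rfl⟩).elim

lemma isIsomorphic_induce_layer {a : ∀ i, V i} (ha : ¬ (boxPi F).adj a a) (i : Fin k) :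
    (F i).IsIsomorphic ((boxPi F).induce (layer a i)) := by
  refine ⟨⟨fun v => ⟨update a i v, fun j hj => update_of_ne hj _ _⟩, fun x => x.1 i,
    fun v => update_self .., fun x => Subtype.ext (funext fun j => ?_)⟩,
    fun v v' => (boxPi_adj_update_update_iff ha i v v').symm⟩
  rcases eq_or_ne j i with rfl | hj
  · simp
  · simp [hj, x.2 j hj]

lemma isIsomorphic_induce_of_eq_pi {S : Set (∀ i, V i)} {C : ∀ i, Set (V i)}
    (hS : S = Set.univ.pi C) :
    ((boxPi F).induce S).IsIsomorphic (boxPi fun i => (F i).induce (C i)) := by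
  subst hS
  refine ⟨Equiv.Set.univPi C, fun x y => exists_congr fun i => and_congr_right' ?_⟩
  exact forall₂_congr fun j _ => ⟨fun h => Subtype.ext h, congrArg Subtype.val⟩

end Product

lemma isIsomorphic_boxPi_box_succAbove {n : ℕ} {V : Fin (n + 1) → Type*}
    (F : ∀ i, LoopGraph (V i)) (m : Fin (n + 1)) :
    (boxPi F).IsIsomorphic ((F m).box (boxPi fun j => F (m.succAbove j))) := by
  refine ⟨(Fin.insertNthEquiv V m).symm, fun x y => ⟨?_, ?_⟩⟩
  · rintro ⟨i, hadj, heq⟩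
    rcases Fin.eq_self_or_eq_succAbove m i with rfl | ⟨i, rfl⟩
    · exact Or.inl ⟨hadj, funext fun j => heq _ (Fin.succAbove_ne i j)⟩
    · exact Or.inr ⟨heq m (Fin.ne_succAbove m i), i, hadj,
        fun j hj => heq _ (Fin.succAbove_right_injective.ne hj)⟩
  · rintro (⟨hadj, heq⟩ | ⟨heq, i, hadj, hrest⟩)
    · refine ⟨m, hadj, fun j hj => ?_⟩
      obtain ⟨j, rfl⟩ := Fin.exists_succAbove_eq hj
      exact congrFun heq j
    · refine ⟨m.succAbove i, hadj, fun j hj => ?_⟩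
      rcases Fin.eq_self_or_eq_succAbove m j with rfl | ⟨j, rfl⟩
      · exact heq
      · exact hrest j (ne_of_apply_ne _ hj)

lemma Irreducible.exists_forall_ne_subsingleton {A : Type u} {X : LoopGraph A}
    (hX : X.Irreducible) {l : ℕ} {U : Fin l → Type u} [∀ j, Nonempty (U j)]
    {F : ∀ j, LoopGraph (U j)} (h : X.IsIsomorphic (boxPi F)) :
    ∃ m, ∀ j, j ≠ m → Subsingleton (U j) := by
  have : Nontrivial A := hX.nontrivial
  have : Nontrivial (∀ j, U j) := h.choose.symm.nontrivial
  obtain ⟨m, hm⟩ : ∃ m, Nontrivial (U m) := by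
    by_contra! hU
    exact not_nontrivial (∀ j, U j) this
  obtain ⟨n, rfl⟩ : ∃ n, l = n + 1 := Nat.exists_eq_succ_of_ne_zero m.pos.ne'
  refine ⟨m, fun j hj => ?_⟩
  rcases hX.2.2.2 _ _ _ _ (h.trans (isIsomorphic_boxPi_box_succAbove F m)) with hfactor | hrest
  · exact (not_subsingleton (U m) hfactor.subsingleton).elim
  · obtain ⟨j, rfl⟩ := Fin.exists_succAbove_eq hj
    have := hrest.subsingleton
    rw [← not_nontrivial_iff_subsingleton]
    intro
    exact not_nontrivial _ (Pi.nontrivial_at (f := fun j => U (m.succAbove j)) j)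

section Distance

variable {k : ℕ} {V : Fin k → Type*} {F : ∀ i, LoopGraph (V i)}

lemma boxPi_N_adj_iff {x y : ∀ i, V i} :
    (boxPi F).N.Adj x y ↔ ∃ i, (F i).N.Adj (x i) (y i) ∧ ∀ j, j ≠ i → x j = y j := by
  constructor
  · rintro ⟨hne, i, hadj, heq⟩
    refine ⟨i, ⟨fun h => hne (funext fun j => ?_), hadj⟩, heq⟩
    rcases eq_or_ne j i with rfl | hj
    exacts [h, heq j hj]
  · rintro ⟨i, ⟨hne, hadj⟩, heq⟩
    exact ⟨fun h => hne (congrFun h i), i, hadj, heq⟩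

def updateHom (x : ∀ i, V i) (i : Fin k) : (F i).N →g (boxPi F).N where
  toFun := update x i
  map_rel' h := boxPi_N_adj_iff.2 ⟨i, by simpa using h, fun j hj => by simp [hj]⟩

@[simp]
lemma updateHom_apply (x : ∀ i, V i) (i : Fin k) (v : V i) :
    updateHom (F := F) x i v = update x i v :=
  rfl

lemma sum_dist_le_length (hF : ∀ i, (F i).N.Connected) {x y : ∀ i, V i}
    (p : (boxPi F).N.Walk x y) : ∑ i, (F i).N.dist (x i) (y i) ≤ p.length := by
  induction p with
  | nil => simp
  | @cons x z y h p ih =>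
    obtain ⟨i, hadj, heq⟩ := boxPi_N_adj_iff.1 h
    have hstep : ∀ j, (F j).N.dist (x j) (y j) ≤
        (F j).N.dist (z j) (y j) + if j = i then 1 else 0 := by
      intro j
      split_ifs with hj
      · subst hj
        calc _ ≤ (F j).N.dist (x j) (z j) + (F j).N.dist (z j) (y j) := (hF j).dist_triangle
          _ = _ := by rw [dist_eq_one_iff_adj.2 hadj, add_comm]
      · rw [heq j hj, add_zero]
    calc ∑ j, (F j).N.dist (x j) (y j)
        ≤ ∑ j, ((F j).N.dist (z j) (y j) + if j = i then 1 else 0) :=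
          Finset.sum_le_sum fun j _ => hstep j
      _ = ∑ j, (F j).N.dist (z j) (y j) + 1 := by simp [Finset.sum_add_distrib]
      _ ≤ (Walk.cons h p).length := by simpa using ih

lemma exists_walk_length_le_sum (hF : ∀ i, (F i).N.Connected) (s : Finset (Fin k)) :
    ∀ x y : ∀ i, V i, (∀ i ∉ s, x i = y i) →
      ∃ p : (boxPi F).N.Walk x y, p.length ≤ ∑ i ∈ s, (F i).N.dist (x i) (y i) := by
  induction s using Finset.induction with
  | empty =>
    intro x y h
    obtain rfl : x = y := funext fun i => h i (Finset.notMem_empty i)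
    exact ⟨Walk.nil, by simp⟩
  | insert i s his ih =>
    intro x y h
    obtain ⟨q, hq⟩ := (hF i).exists_walk_length_eq_dist (x i) (y i)
    obtain ⟨p, hp⟩ := ih (update x i (y i)) y fun j hj => by
      rcases eq_or_ne j i with rfl | hji
      · exact update_self ..
      · rw [update_of_ne hji]
        exact h j (by simp [hji, hj])
    have hsum : ∑ j ∈ s, (F j).N.dist (update x i (y i) j) (y j)
        = ∑ j ∈ s, (F j).N.dist (x j) (y j) :=
      Finset.sum_congr rfl fun j hj => by rw [update_of_ne (ne_of_mem_of_not_mem hj his)]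
    obtain ⟨q', hq'⟩ : ∃ q' : (boxPi F).N.Walk x (update x i (y i)), q'.length = q.length :=
      ⟨(q.map (updateHom x i)).copy (by simp) (by simp),
        (Walk.length_copy _ _ _).trans (q.length_map _)⟩
    refine ⟨q'.append p, ?_⟩
    rw [Walk.length_append, hq', hq, Finset.sum_insert his, ← hsum]
    exact Nat.add_le_add_left hp _

lemma dist_boxPi (hF : ∀ i, (F i).N.Connected) (x y : ∀ i, V i) :
    (boxPi F).N.dist x y = ∑ i, (F i).N.dist (x i) (y i) := by
  obtain ⟨p, hp⟩ := exists_walk_length_le_sum hF Finset.univ x y (by simp)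
  obtain ⟨q, hq⟩ := p.reachable.exists_walk_length_eq_dist
  exact le_antisymm ((dist_le p).trans hp) (hq ▸ sum_dist_le_length hF q)

lemma dist_add_dist_boxPi_eq_iff (hF : ∀ i, (F i).N.Connected) {x y z : ∀ i, V i} :
    (boxPi F).N.dist x z + (boxPi F).N.dist z y = (boxPi F).N.dist x y ↔
      ∀ i, (F i).N.dist (x i) (z i) + (F i).N.dist (z i) (y i) = (F i).N.dist (x i) (y i) := by
  simp only [dist_boxPi hF, ← Finset.sum_add_distrib]
  rw [eq_comm, Finset.sum_eq_sum_iff_of_le fun i _ => (hF i).dist_triangle]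
  simp [eq_comm]

lemma isIntervalClosed_layer (hF : ∀ i, (F i).N.Connected) (a : ∀ i, V i) (i : Fin k) :
    (boxPi F).N.IsIntervalClosed (layer a i) := by
  intro x hx y hy z hz j hj
  have hzj := (dist_add_dist_boxPi_eq_iff hF).1 hz j
  rw [hx j hj, hy j hj, dist_self, Nat.add_eq_zero_iff] at hzj
  exact ((hF j).dist_eq_zero_iff.1 hzj.1).symm

lemma eq_pi_image_eval_of_isIntervalClosed (hF : ∀ i, (F i).N.Connected)
    {S : Set (∀ i, V i)} (hS : (boxPi F).N.IsIntervalClosed S) (hne : S.Nonempty) :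
    S = Set.univ.pi fun i => Function.eval i '' S := by
  refine (Set.subset_pi_eval_image _ S).antisymm
    (Set.pi_image_eval_subset_of_update_mem hne fun x hx y hy i => hS x hx y hy _ ?_)
  refine (dist_add_dist_boxPi_eq_iff hF).2 fun j => ?_
  rcases eq_or_ne j i with rfl | hj <;> simp [*]

end Distance

lemma exists_image_layer_subset_layer {k l : ℕ} {V : Fin k → Type u} {W : Fin l → Type u}
    {G : ∀ i, LoopGraph (V i)} {H : ∀ j, LoopGraph (W j)} (hG : ∀ i, (G i).N.Connected)
    (hH : ∀ j, (H j).N.Connected) (φ : (∀ i, V i) ≃ (∀ j, W j))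
    (hφ : ∀ x y, (boxPi G).adj x y ↔ (boxPi H).adj (φ x) (φ y)) {a : ∀ i, V i}
    (ha : ¬ (boxPi G).adj a a) {i : Fin k} (hi : (G i).Irreducible) :
    ∃ m, φ '' layer a i ⊆ layer (φ a) m := by
  set S := φ '' layer a i
  have haS : φ a ∈ S := Set.mem_image_of_mem φ fun _ _ => rfl
  have hS : (boxPi H).N.IsIntervalClosed S :=
    (isIntervalClosed_layer hG a i).image_iso (isoN φ hφ)
  have : ∀ j, Nonempty (eval j '' S) := fun j => ⟨⟨_, Set.mem_image_of_mem _ haS⟩⟩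
  obtain ⟨m, hm⟩ := hi.exists_forall_ne_subsingleton <|
    ((isIsomorphic_induce_layer ha i).trans (isIsomorphic_induce_image φ hφ _)).trans
      (isIsomorphic_induce_of_eq_pi (eq_pi_image_eval_of_isIntervalClosed hH hS ⟨_, haS⟩))
  refine ⟨m, fun y hy j hj => ?_⟩
  have := hm j hj
  exact congrArg Subtype.val
    (Subsingleton.elim (⟨y j, y, hy, rfl⟩ : eval j '' S) ⟨φ a j, φ a, haS, rfl⟩)

lemma eq_of_layer_subset_layer {ι : Type*} [DecidableEq ι] {V : ι → Type*} {a : ∀ i, V i}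
    {i i' : ι} [Nontrivial (V i)] (h : layer a i ⊆ layer a i') : i = i' := by
  by_contra hii'
  obtain ⟨v, hv⟩ := exists_ne (a i)
  exact hv (by simpa using h (fun j hj => update_of_ne hj v a) i hii')

lemma exists_equiv_image_layer_eq {ι κ : Type*} [DecidableEq ι] [DecidableEq κ]
    {V : ι → Type*} {W : κ → Type*} [∀ i, Nontrivial (V i)] [∀ j, Nontrivial (W j)]
    (φ : (∀ i, V i) ≃ (∀ j, W j)) (a : ∀ i, V i)
    (hσ : ∀ i, ∃ j, φ '' layer a i ⊆ layer (φ a) j)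
    (hτ : ∀ j, ∃ i, φ.symm '' layer (φ a) j ⊆ layer a i) :
    ∃ π : ι ≃ κ, ∀ i, φ '' layer a i = layer (φ a) (π i) := by
  choose σ hσ using hσ
  choose τ hτ using hτ
  have hσ' : ∀ i, layer a i ⊆ φ.symm '' layer (φ a) (σ i) := fun i =>
    (φ.symm_image_image _).symm.subset.trans (Set.image_mono (hσ i))
  have hτ' : ∀ j, layer (φ a) j ⊆ φ '' layer a (τ j) := fun j =>
    (φ.image_symm_image _).symm.subset.trans (Set.image_mono (hτ j))
  have hτσ : ∀ i, τ (σ i) = i := fun i =>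
    (eq_of_layer_subset_layer ((hσ' i).trans (hτ _))).symm
  have hστ : ∀ j, σ (τ j) = j := fun j =>
    (eq_of_layer_subset_layer ((hτ' j).trans (hσ _))).symm
  refine ⟨⟨σ, τ, hτσ, hστ⟩, fun i => (hσ i).antisymm ?_⟩
  simpa only [hτσ] using hτ' (σ i)

end LoopGraph

theorem iso_permutes_layers_general {k l : ℕ} {V : Fin k → Type u} {W : Fin l → Type u}
    (G : ∀ i, LoopGraph (V i)) (H : ∀ j, LoopGraph (W j))
    (hGirr : ∀ i, (G i).Irreducible) (hHirr : ∀ j, (H j).Irreducible)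
    (hGul : ∃ v, ¬ (LoopGraph.boxPi G).adj v v)
    (φ : (∀ i, V i) ≃ (∀ j, W j))
    (hφ : ∀ x y, (LoopGraph.boxPi G).adj x y ↔
      (LoopGraph.boxPi H).adj (φ x) (φ y)) :
    k = l ∧
      ∀ a : ∀ i, V i, ¬ (LoopGraph.boxPi G).adj a a →
        ∃ π : Fin k ≃ Fin l, ∀ i : Fin k,
          φ '' {x | ∀ j, j ≠ i → x j = a j}
            = {y | ∀ j, j ≠ π i → y j = φ a j} := by
  have : ∀ i, Nontrivial (V i) := fun i => (hGirr i).nontrivial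
  have : ∀ j, Nontrivial (W j) := fun j => (hHirr j).nontrivial
  have hGc : ∀ i, (G i).N.Connected := fun i => (hGirr i).2.1
  have hHc : ∀ j, (H j).N.Connected := fun j => (hHirr j).2.1
  have hφsymm : ∀ x y, (LoopGraph.boxPi H).adj x y ↔
      (LoopGraph.boxPi G).adj (φ.symm x) (φ.symm y) := fun x y => by
    rw [hφ, φ.apply_symm_apply, φ.apply_symm_apply]
  have hperm : ∀ a, ¬ (LoopGraph.boxPi G).adj a a → ∃ π : Fin k ≃ Fin l,
      ∀ i, φ '' LoopGraph.layer a i = LoopGraph.layer (φ a) (π i) := fun a ha =>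
    LoopGraph.exists_equiv_image_layer_eq φ a
      (fun i => LoopGraph.exists_image_layer_subset_layer hGc hHc φ hφ ha (hGirr i))
      (fun j => by
        obtain ⟨i, hi⟩ := LoopGraph.exists_image_layer_subset_layer hHc hGc φ.symm hφsymm
          (a := φ a) (fun h => ha ((hφ a a).2 h)) (hHirr j)
        exact ⟨i, by rwa [φ.symm_apply_apply] at hi⟩)
  obtain ⟨a, ha⟩ := hGul
  obtain ⟨π, -⟩ := hperm a ha
  exact ⟨Fin.equiv_iff_eq.1 ⟨π⟩, hperm⟩

/-- Isomorphisms permute layers: an isomorphism between products of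
irreducible graphs maps layers through an unlooped vertex onto layers. -/
theorem iso_permutes_layers {k l : ℕ} {V : Fin k → Type u} {W : Fin l → Type u}
    [∀ i, Fintype (V i)] [∀ j, Fintype (W j)]
    (G : ∀ i, LoopGraph (V i)) (H : ∀ j, LoopGraph (W j))
    (hGirr : ∀ i, (G i).Irreducible) (hHirr : ∀ j, (H j).Irreducible)
    (hGnt : ¬ (LoopGraph.boxPi G).IsTrivial)
    (hGconn : (LoopGraph.boxPi G).N.Connected)
    (hGul : ∃ v, ¬ (LoopGraph.boxPi G).adj v v)
    (hHnt : ¬ (LoopGraph.boxPi H).IsTrivial)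
    (hHconn : (LoopGraph.boxPi H).N.Connected)
    (hHul : ∃ w, ¬ (LoopGraph.boxPi H).adj w w)
    (φ : (∀ i, V i) ≃ (∀ j, W j))
    (hφ : ∀ x y, (LoopGraph.boxPi G).adj x y ↔
      (LoopGraph.boxPi H).adj (φ x) (φ y)) :
    k = l ∧
      ∀ a : ∀ i, V i, ¬ (LoopGraph.boxPi G).adj a a →
        ∃ π : Fin k ≃ Fin l, ∀ i : Fin k,
          φ '' {x | ∀ j, j ≠ i → x j = a j}
            = {y | ∀ j, j ≠ π i → y j = φ a j} :=
  iso_permutes_layers_general G H hGirr hHirr hGul φ hφ
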